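/- arXiv:2207.05119 — 3 statements merged into one kernel-verified Lean document; each statement's English description precedes it below -/
import Mathlib

section
/- For any permutation w in S_n, the minimum number of runs needed to factor a reduced word of w is at least n minus the length of a longest increasing subsequence of w. -/
/-- The simple transposition `s_i` in `S_n`, swapping positions `i` and `i+1`
(1-indexed, so valid for `1 ≤ i ≤ n-1`); otherwise the identity. -/
def simpleT (n : ℕ) (i : ℕ) : Equiv.Perm (Fin n) :=
  if h : 1 ≤ i ∧ i < n then Equiv.swap ⟨i - 1, by omega⟩ ⟨i, h.2⟩ else 1

/-- `l` is a word in the simple transpositions `s_1, …, s_{n-1}` with product `w`. -/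
def IsWord (n : ℕ) (w : Equiv.Perm (Fin n)) (l : List ℕ) : Prop :=
  (∀ i ∈ l, 1 ≤ i ∧ i < n) ∧ (l.map (simpleT n)).prod = w

/-- The Coxeter length of `w`. -/
noncomputable def coxLength (n : ℕ) (w : Equiv.Perm (Fin n)) : ℕ :=
  sInf {k | ∃ l, IsWord n w l ∧ l.length = k}

/-- A reduced word for `w`: a word of minimal length. -/
def IsReducedWord (n : ℕ) (w : Equiv.Perm (Fin n)) (l : List ℕ) : Prop :=
  IsWord n w l ∧ l.length = coxLength n w

/-- A run: a nonempty word of consecutive integers, increasing or decreasing. -/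
def IsRun (r : List ℕ) : Prop :=
  r ≠ [] ∧ (List.Chain' (fun a b => b = a + 1) r ∨ List.Chain' (fun a b => a = b + 1) r)

/-- `run(w)`: the minimum number of runs whose concatenation is a reduced word of `w`. -/
noncomputable def runStat (n : ℕ) (w : Equiv.Perm (Fin n)) : ℕ :=
  sInf {k | ∃ rs : List (List ℕ), rs.length = k ∧ (∀ r ∈ rs, IsRun r) ∧
    IsReducedWord n w rs.flatten}

/-- One-line notation of `w`, with entries `1, …, n`. -/
def oneLine {n : ℕ} (w : Equiv.Perm (Fin n)) : List ℕ :=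
  List.ofFn (fun i => (w i : ℕ) + 1)

/-- Length of a longest increasing subsequence of the one-line notation of `w`. -/
noncomputable def lisLen {n : ℕ} (w : Equiv.Perm (Fin n)) : ℕ :=
  sSup {k | ∃ l : List ℕ, l.Sublist (oneLine w) ∧ l.Pairwise (· < ·) ∧ l.length = k}

/-- Schensted row insertion: insert `x` into row `r`, possibly bumping an entry. -/
def rowInsert (r : List ℕ) (x : ℕ) : List ℕ × Option ℕ :=
  match r.findIdx? (fun y => decide (x < y)) with
  | none => (r ++ [x], none)
  | some i => (r.set i x, r[i]?)

/-- Schensted insertion of `x` into a tableau (list of rows). -/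
def bumpInsert : List (List ℕ) → ℕ → List (List ℕ)
  | [], x => [[x]]
  | r :: rest, x =>
    match rowInsert r x with
    | (r', none) => r' :: rest
    | (r', some y) => r' :: bumpInsert rest y

/-- The RSK insertion tableau of a word. -/
def Ptab (w : List ℕ) : List (List ℕ) := w.foldl bumpInsert []

/-- The index of the row where the new box appeared, going from `p` to `p'`. -/
def recRow (p p' : List (List ℕ)) : ℕ :=
  (List.range p'.length).findIdx
    (fun j => decide ((p.getD j []).length < (p'.getD j []).length))

/-- Add entry `v` at the end of row `j` of `q`. -/
def addAt (q : List (List ℕ)) (j v : ℕ) : List (List ℕ) :=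
  if j < q.length then q.set j ((q.getD j []) ++ [v]) else q ++ [[v]]

/-- The RSK recording tableau of a word. -/
def Qtab (w : List ℕ) : List (List ℕ) :=
  ((w.zipIdx.map Prod.swap).foldl (fun pq ix =>
    let p' := bumpInsert pq.1 ix.2
    (p', addAt pq.2 (recRow pq.1 p') (ix.1 + 1))) (([], []) : List (List ℕ) × List (List ℕ))).2

/-- The second row of a tableau. -/
def Row2 (t : List (List ℕ)) : List ℕ := t.getD 1 []

/-- A set `L` of integers is uncrowded if every interval `[y, y+2x]` contains
at most `x+1` elements of `L`. -/
def Uncrowded (L : Set ℤ) : Prop :=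
  ∀ (y : ℤ) (x : ℕ), 0 < x → ({z : ℤ | y ≤ z ∧ z ≤ y + 2 * (x : ℤ)} ∩ L).ncard ≤ x + 1

/-- `w` is boolean: some reduced word of `w` has all distinct letters. -/
def BooleanPerm (n : ℕ) (w : Equiv.Perm (Fin n)) : Prop :=
  ∃ l, IsReducedWord n w l ∧ l.Nodup

/-- `w` avoids the pattern `321`. -/
def Avoids321 {n : ℕ} (w : Equiv.Perm (Fin n)) : Prop :=
  ¬ ∃ i j k : Fin n, i < j ∧ j < k ∧ w k < w j ∧ w j < w i

/-- `w` avoids the pattern `3412`. -/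
def Avoids3412 {n : ℕ} (w : Equiv.Perm (Fin n)) : Prop :=
  ¬ ∃ i j k l : Fin n, i < j ∧ j < k ∧ k < l ∧ w k < w l ∧ w l < w i ∧ w i < w j

/-- The support of `w`: the letters appearing in reduced words of `w`. -/
def Supp (n : ℕ) (w : Equiv.Perm (Fin n)) : Set ℕ :=
  {i | ∃ l, IsReducedWord n w l ∧ i ∈ l}

/-- The entries of a row, as a set of integers. -/
def entrySet (r : List ℕ) : Set ℤ := {z | ∃ x ∈ r, (x : ℤ) = z}

/-- `(r1, r2)` are the rows of a standard Young tableau of size `n` with at most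
two rows (entries `1, …, n`). -/
def IsSYT2 (n : ℕ) (r1 r2 : List ℕ) : Prop :=
  r1.Pairwise (· < ·) ∧ r2.Pairwise (· < ·) ∧ r2.length ≤ r1.length ∧
  (∀ i < r2.length, r1.getD i 0 < r2.getD i 0) ∧
  (r1 ++ r2).Perm (List.range' 1 n)

/-- The tableau (list of nonempty rows) with rows `r1`, `r2`. -/
def tab2 (r1 r2 : List ℕ) : List (List ℕ) :=
  if r2 = [] then (if r1 = [] then [] else [r1]) else [r1, r2]

/-- Every maximal block of `1`s (`true`s) in the binary word has odd length. -/
def OddBlocks (l : List Bool) : Prop :=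
  ∀ l₁ l₂ l₃ : List Bool, l = l₁ ++ l₂ ++ l₃ → l₂ ≠ [] → (∀ b ∈ l₂, b = true) →
    l₁.getLast? ≠ some true → l₃.head? ≠ some true → Odd l₂.length

/-!
Right multiplication by the product `s_a s_{a+1} ⋯ s_b` of a run cyclically shifts a block of
consecutive positions of the one-line notation: one entry moves and all others keep their
relative order, i.e. the product is strictly monotone off a single point. Such a move destroys
at most one element of an increasing subsequence, so it lowers `λ₁` by at most one. Writing `w`
as the identity (with `λ₁ = n`) times the `run(w)` runs of a reduced word gives
`λ₁(w) ≥ n - run(w)`.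
-/

lemma lisLen_bddAbove {n : ℕ} (w : Equiv.Perm (Fin n)) :
    BddAbove {k | ∃ l : List ℕ, l.Sublist (oneLine w) ∧ l.Pairwise (· < ·) ∧ l.length = k} :=
  ⟨(oneLine w).length, fun _ ⟨_, hs, _, hk⟩ => hk ▸ hs.length_le⟩

lemma card_le_lisLen_of_strictMonoOn {n : ℕ} {w : Equiv.Perm (Fin n)} {s : Finset (Fin n)}
    (hw : StrictMonoOn w s) : s.card ≤ lisLen w := by
  refine le_csSup (lisLen_bddAbove w)
    ⟨(s.sort (· ≤ ·)).map fun i => (w i : ℕ) + 1, ?_, ?_, by simp⟩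
  · rw [oneLine, List.ofFn_eq_map]
    refine List.Sublist.map _ (List.sublist_of_subperm_of_sortedLE ?_
      (s.sortedLT_sort.sortedLE) (List.sortedLT_finRange n).sortedLE)
    exact List.subperm_of_subset (s.sort_nodup _) fun i _ => List.mem_finRange i
  · refine List.pairwise_map.2 (s.sortedLT_sort.pairwise.imp_of_mem fun hi hj hij => ?_)
    simpa using hw (by simpa using hi) (by simpa using hj) hij

lemma exists_finset_strictMonoOn_card_eq_lisLen {n : ℕ} (w : Equiv.Perm (Fin n)) :
    ∃ s : Finset (Fin n), StrictMonoOn w s ∧ s.card = lisLen w := by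
  obtain ⟨l, hsub, hinc, hlen⟩ :
      ∃ l : List ℕ, l.Sublist (oneLine w) ∧ l.Pairwise (· < ·) ∧ l.length = lisLen w := by
    refine Nat.sSup_mem ?_ (lisLen_bddAbove w)
    exact ⟨0, [], List.nil_sublist _, .nil, rfl⟩
  rw [oneLine, List.ofFn_eq_map, List.sublist_map_iff] at hsub
  obtain ⟨is, his, rfl⟩ := hsub
  -- symmetrized so that `List.Pairwise.forall` applies to any two distinct members
  let R : Fin n → Fin n → Prop := fun i j => (i < j → w i < w j) ∧ (j < i → w j < w i)
  have hR : is.Pairwise R := by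
    refine ((List.sortedLT_finRange n).pairwise.sublist his).and (List.pairwise_map.1 hinc)
      |>.imp fun ⟨hij, hw⟩ => ⟨fun _ => by simpa using hw, fun hji => absurd hij hji.asymm⟩
  refine ⟨is.toFinset, fun i hi j hj hij => ?_, ?_⟩
  · exact (@List.Pairwise.forall _ R _ ⟨fun _ _ h => ⟨h.2, h.1⟩⟩ hR i (by simpa using hi) j
      (by simpa using hj) hij.ne).1 hij
  · rw [List.toFinset_card_of_nodup (his.nodup (List.nodup_finRange n)), ← hlen, List.length_map]

lemma lisLen_le_lisLen_mul_add_one {n : ℕ} (u σ : Equiv.Perm (Fin n)) {p : Fin n}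
    (hσ : StrictMonoOn σ {p}ᶜ) : lisLen u ≤ lisLen (u * σ) + 1 := by
  obtain ⟨s, hs, hcard⟩ := exists_finset_strictMonoOn_card_eq_lisLen u
  have hmem {x : Fin n} (hx : x ∈ (s.erase (σ p)).map σ.symm.toEmbedding) :
      x ≠ p ∧ σ x ∈ s := by
    rw [Finset.mem_map_equiv, Equiv.symm_symm, Finset.mem_erase, σ.injective.ne_iff] at hx
    exact hx
  have hmono : StrictMonoOn (u * σ) ((s.erase (σ p)).map σ.symm.toEmbedding) :=
    fun x hx y hy hxy => hs (hmem hx).2 (hmem hy).2 (hσ (hmem hx).1 (hmem hy).1 hxy)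
  calc lisLen u = s.card := hcard.symm
    _ ≤ (s.erase (σ p)).card + 1 := Nat.le_add_of_sub_le Finset.pred_card_le_card_erase
    _ ≤ lisLen (u * σ) + 1 := by
      rw [← Finset.card_map σ.symm.toEmbedding]
      exact Nat.add_le_add_right (card_le_lisLen_of_strictMonoOn hmono) 1

lemma Fin.swap_strictMonoOn_compl {n : ℕ} {i j : Fin n} (hij : (j : ℕ) = i + 1) :
    StrictMonoOn (Equiv.swap i j) {i}ᶜ ∧ StrictMonoOn (Equiv.swap i j) {j}ᶜ := by
  constructor <;>
  · intro x hx y hy hxy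
    simp only [Set.mem_compl_iff, Set.mem_singleton_iff, Fin.ext_iff] at hx hy
    rw [Fin.lt_def] at hxy ⊢
    simp only [Equiv.swap_apply_def, Fin.ext_iff]
    split_ifs <;> omega

lemma simpleT_of_valid {n a : ℕ} (ha : 1 ≤ a) (han : a < n) :
    simpleT n a = Equiv.swap ⟨a - 1, by omega⟩ ⟨a, han⟩ :=
  dif_pos ⟨ha, han⟩

lemma StrictMonoOn.perm_mul {n : ℕ} {σ τ : Equiv.Perm (Fin n)} {p q : Fin n}
    (hσ : StrictMonoOn σ {q}ᶜ) (hτ : StrictMonoOn τ {p}ᶜ) (hpq : τ p = q) :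
    StrictMonoOn (σ * τ) {p}ᶜ :=
  hσ.comp hτ fun x hx => by
    simpa [← hpq, τ.injective.eq_iff] using hx

lemma strictMonoOn_simpleT_mul_of_apply_eq {n a : ℕ} (ha : 1 ≤ a) (han : a < n)
    {τ : Equiv.Perm (Fin n)} {p : Fin n} (hτ : StrictMonoOn τ {p}ᶜ) (hp : (τ p : ℕ) = a) :
    StrictMonoOn (simpleT n a * τ) {p}ᶜ ∧ ((simpleT n a * τ) p : ℕ) = a - 1 := by
  rw [simpleT_of_valid ha han]
  have hp' : τ p = ⟨a, han⟩ := Fin.ext hp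
  refine ⟨(Fin.swap_strictMonoOn_compl (by simp only; omega)).2.perm_mul hτ hp', ?_⟩
  simp [hp']

lemma strictMonoOn_simpleT_mul_of_apply_eq_sub_one {n a : ℕ} (ha : 1 ≤ a) (han : a < n)
    {τ : Equiv.Perm (Fin n)} {p : Fin n} (hτ : StrictMonoOn τ {p}ᶜ) (hp : (τ p : ℕ) = a - 1) :
    StrictMonoOn (simpleT n a * τ) {p}ᶜ ∧ ((simpleT n a * τ) p : ℕ) = a := by
  rw [simpleT_of_valid ha han]
  have hp' : τ p = ⟨a - 1, by omega⟩ := Fin.ext hp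
  refine ⟨(Fin.swap_strictMonoOn_compl (by simp only; omega)).1.perm_mul hτ hp', ?_⟩
  simp [hp']

lemma exists_strictMonoOn_prod_of_isChain_succ {n : ℕ} (t : List ℕ) (a : ℕ)
    (hrun : (a :: t).IsChain fun x y => y = x + 1) (hv : ∀ i ∈ a :: t, 1 ≤ i ∧ i < n) :
    ∃ p, StrictMonoOn ((a :: t).map (simpleT n)).prod {p}ᶜ ∧
      (((a :: t).map (simpleT n)).prod p : ℕ) = a - 1 := by
  obtain ⟨ha, han⟩ := hv a List.mem_cons_self
  rw [List.map_cons, List.prod_cons]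
  induction t generalizing a with
  | nil =>
    exact ⟨⟨a, han⟩,
      strictMonoOn_simpleT_mul_of_apply_eq ha han (strictMono_id.strictMonoOn _) rfl⟩
  | cons b t ih =>
    obtain ⟨rfl, htail⟩ := List.isChain_cons_cons.1 hrun
    obtain ⟨p, hp, hpb⟩ := ih (a + 1) htail (fun i hi => hv i (List.mem_cons_of_mem a hi))
      (by omega) (hv (a + 1) (by simp)).2
    exact ⟨p, strictMonoOn_simpleT_mul_of_apply_eq ha han hp hpb⟩

lemma exists_strictMonoOn_prod_of_isChain_pred {n : ℕ} (t : List ℕ) (a : ℕ)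
    (hrun : (a :: t).IsChain fun x y => x = y + 1) (hv : ∀ i ∈ a :: t, 1 ≤ i ∧ i < n) :
    ∃ p, StrictMonoOn ((a :: t).map (simpleT n)).prod {p}ᶜ ∧
      (((a :: t).map (simpleT n)).prod p : ℕ) = a := by
  obtain ⟨ha, han⟩ := hv a List.mem_cons_self
  rw [List.map_cons, List.prod_cons]
  induction t generalizing a with
  | nil =>
    exact ⟨⟨a - 1, by omega⟩,
      strictMonoOn_simpleT_mul_of_apply_eq_sub_one ha han (strictMono_id.strictMonoOn _) rfl⟩
  | cons b t ih =>
    obtain ⟨rfl, htail⟩ := List.isChain_cons_cons.1 hrun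
    obtain ⟨p, hp, hpb⟩ := ih b htail (fun i hi => hv i (List.mem_cons_of_mem _ hi))
      (hv b (by simp)).1 (by omega)
    exact ⟨p, strictMonoOn_simpleT_mul_of_apply_eq_sub_one ha han hp hpb⟩

lemma IsRun.exists_strictMonoOn_prod {n : ℕ} {r : List ℕ} (hr : IsRun r)
    (hv : ∀ i ∈ r, 1 ≤ i ∧ i < n) : ∃ p, StrictMonoOn (r.map (simpleT n)).prod {p}ᶜ := by
  obtain ⟨hne, hinc | hdec⟩ := hr
  all_goals obtain ⟨a, t, rfl⟩ := List.exists_cons_of_ne_nil hne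
  · exact (exists_strictMonoOn_prod_of_isChain_succ t a hinc hv).imp fun _ => And.left
  · exact (exists_strictMonoOn_prod_of_isChain_pred t a hdec hv).imp fun _ => And.left

lemma lisLen_le_lisLen_mul_prod_add_length {n : ℕ} (rs : List (List ℕ))
    (hruns : ∀ r ∈ rs, IsRun r) (hv : ∀ i ∈ rs.flatten, 1 ≤ i ∧ i < n)
    (u : Equiv.Perm (Fin n)) :
    lisLen u ≤ lisLen (u * (rs.flatten.map (simpleT n)).prod) + rs.length := by
  induction rs generalizing u with
  | nil => simp
  | cons r rs ih =>
    simp only [List.mem_cons, forall_eq_or_imp, List.flatten_cons, List.mem_append] at hruns hv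
    obtain ⟨p, hp⟩ := hruns.1.exists_strictMonoOn_prod fun i hi => hv i (Or.inl hi)
    have hrest := ih hruns.2 (fun i hi => hv i (Or.inr hi)) (u * (r.map (simpleT n)).prod)
    have hfirst := lisLen_le_lisLen_mul_add_one u _ hp
    simp only [List.flatten_cons, List.map_append, List.prod_append, List.length_cons, ← mul_assoc]
    omega

lemma exists_isWord {n : ℕ} (w : Equiv.Perm (Fin n)) : ∃ l, IsWord n w l := by
  cases n with
  | zero => exact ⟨[], by simp, Subsingleton.elim _ _⟩
  | succ m =>
    have hw : w ∈ Submonoid.closure (Set.range fun i : Fin m => Equiv.swap i.castSucc i.succ) :=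
      Equiv.Perm.mclosure_swap_castSucc_succ m ▸ Submonoid.mem_top w
    induction hw using Submonoid.closure_induction with
    | mem x hx =>
      obtain ⟨i, rfl⟩ := hx
      refine ⟨[i + 1], by simp, ?_⟩
      rw [List.map_singleton, List.prod_singleton, simpleT_of_valid (by omega) (by omega)]
      rfl
    | one => exact ⟨[], by simp, rfl⟩
    | mul x y _ _ hx hy =>
      obtain ⟨lx, hlx, hx⟩ := hx
      obtain ⟨ly, hly, hy⟩ := hy
      refine ⟨lx ++ ly, fun i hi => ?_, by simp [hx, hy]⟩
      exact (List.mem_append.1 hi).elim (hlx i) (hly i)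

lemma exists_isReducedWord {n : ℕ} (w : Equiv.Perm (Fin n)) : ∃ l, IsReducedWord n w l := by
  obtain ⟨l, hl⟩ := exists_isWord w
  exact Nat.sInf_mem (s := {k | ∃ l, IsWord n w l ∧ l.length = k}) ⟨_, l, hl, rfl⟩

lemma exists_runs_length_eq_runStat {n : ℕ} (w : Equiv.Perm (Fin n)) :
    ∃ rs : List (List ℕ), rs.length = runStat n w ∧ (∀ r ∈ rs, IsRun r) ∧
      IsReducedWord n w rs.flatten := by
  obtain ⟨l, hl⟩ := exists_isReducedWord w
  refine Nat.sInf_mem (s := {k | ∃ rs : List (List ℕ), rs.length = k ∧ (∀ r ∈ rs, IsRun r) ∧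
    IsReducedWord n w rs.flatten}) ⟨_, l.map ([·]), rfl, ?_, ?_⟩
  · simp only [List.mem_map]
    rintro _ ⟨i, -, rfl⟩
    exact ⟨List.cons_ne_nil i [], .inl (List.isChain_singleton i)⟩
  · rwa [← List.flatMap_def, List.flatMap_singleton']

theorem stmt1 (n : ℕ) (w : Equiv.Perm (Fin n)) :
    n - lisLen w ≤ runStat n w := by
  obtain ⟨rs, hlen, hruns, ⟨hv, hprod⟩, -⟩ := exists_runs_length_eq_runStat w
  have hid : n ≤ lisLen (1 : Equiv.Perm (Fin n)) := by
    simpa using card_le_lisLen_of_strictMonoOn (w := 1) (s := Finset.univ)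
      (strictMono_id.strictMonoOn _)
  have hruns_bound := lisLen_le_lisLen_mul_prod_add_length rs hruns hv 1
  rw [one_mul, hprod] at hruns_bound
  omega
end

section
/- For any nonidentity permutation w in S_n, there exists a run r (a word of consecutive integers, increasing or decreasing) such that either wr or rw (product of w with the permutation given by r) has Coxeter length ℓ(w) − (length of r), and has a strictly longer longest increasing subsequence than w. -/
open Equiv

variable {n : ℕ}

namespace Equiv.Perm

def inversions (u : Perm (Fin n)) : Finset (Fin n × Fin n) :=
  {p | p.1 < p.2 ∧ u p.2 < u p.1}

def numInversions (u : Perm (Fin n)) : ℕ := u.inversions.card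

@[simp]
lemma mem_inversions {u : Perm (Fin n)} {p : Fin n × Fin n} :
    p ∈ u.inversions ↔ p.1 < p.2 ∧ u p.2 < u p.1 := by
  simp [inversions]

@[simp]
lemma numInversions_one : numInversions (1 : Perm (Fin n)) = 0 := by
  simp only [numInversions, Finset.card_eq_zero, Finset.eq_empty_iff_forall_notMem,
    mem_inversions, Perm.coe_one, id_eq, not_and, not_lt]
  exact fun _ h => h.le

lemma numInversions_inv (u : Perm (Fin n)) : u⁻¹.numInversions = u.numInversions :=
  Finset.card_equiv ((Equiv.prodComm _ _).trans (u⁻¹.prodCongr u⁻¹)) fun p => by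
    simp [and_comm]

lemma swap_lt_swap_iff {p q : Fin n} (hq : (q : ℕ) = p + 1) (x y : Fin n) :
    (swap p q x < swap p q y ∧ (swap p q x, swap p q y) ≠ (p, q)) ↔
      (x < y ∧ (x, y) ≠ (p, q)) := by
  simp only [ne_eq, Prod.ext_iff, Fin.lt_def, Fin.ext_iff, swap_apply_def]
  split_ifs <;> simp_all <;> omega

lemma numInversions_mul_swap_add_one {u : Perm (Fin n)} {p q : Fin n} (hq : (q : ℕ) = p + 1)
    (hd : u q < u p) : (u * swap p q).numInversions + 1 = u.numInversions := by
  have hpq : p < q := by rw [Fin.lt_def]; omega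
  have hmem : (p, q) ∈ u.inversions := mem_inversions.2 ⟨hpq, hd⟩
  have hnot : (p, q) ∉ (u * swap p q).inversions := by simp [hd.le]
  have herase : ((u * swap p q).inversions.erase (p, q)).card = (u.inversions.erase (p, q)).card :=
    Finset.card_equiv ((swap p q).prodCongr (swap p q)) fun ⟨x, y⟩ => by
      have := swap_lt_swap_iff hq x y
      simp only [Finset.mem_erase, mem_inversions, Perm.mul_apply, prodCongr_apply,
        Prod.map] at this ⊢
      tauto
  rw [numInversions, numInversions, ← Finset.erase_eq_of_notMem hnot, herase,
    Finset.card_erase_add_one hmem]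

lemma exists_descent_of_ne_one {u : Perm (Fin n)} (hu : u ≠ 1) :
    ∃ j : ℕ, ∃ h : j + 1 < n, u ⟨j + 1, h⟩ < u ⟨j, by omega⟩ := by
  cases n with
  | zero => exact absurd (Subsingleton.elim u 1) hu
  | succ m =>
    by_contra! hasc
    have hmono : StrictMono u := Fin.strictMono_iff_lt_succ.2 fun i =>
      (hasc i i.succ.isLt).lt_of_ne (u.injective.ne (Fin.castSucc_lt_succ (i := i)).ne)
    exact hu (DFunLike.coe_injective ((hmono.range_inj strictMono_id).1 (by simp)))

end Equiv.Perm

open Equiv.Perm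

lemma simpleT_eq_swap {j : ℕ} (h : j + 1 < n) :
    simpleT n (j + 1) = swap ⟨j, by omega⟩ ⟨j + 1, h⟩ := by
  simp [simpleT, h]

lemma simpleT_mul_self (i : ℕ) : simpleT n i * simpleT n i = 1 := by
  unfold simpleT
  split_ifs <;> simp

lemma simpleT_inv (i : ℕ) : (simpleT n i)⁻¹ = simpleT n i :=
  inv_eq_of_mul_eq_one_right (simpleT_mul_self i)

lemma numInversions_mul_simpleT_le (u : Perm (Fin n)) (i : ℕ) :
    (u * simpleT n i).numInversions ≤ u.numInversions + 1 := by
  unfold simpleT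
  split_ifs with h
  · set p : Fin n := ⟨i - 1, by omega⟩
    set q : Fin n := ⟨i, h.2⟩
    have hq : (q : ℕ) = p + 1 := by simp only [p, q]; omega
    have hqp : q ≠ p := by simp only [ne_eq, Fin.ext_iff, q, p]; omega
    rcases lt_or_gt_of_ne (u.injective.ne hqp) with hd | hd
    · have := numInversions_mul_swap_add_one hq hd
      omega
    · have := numInversions_mul_swap_add_one (u := u * swap p q) hq (by simpa using hd)
      rw [mul_assoc, swap_mul_self, mul_one] at this
      omega
  · simp

lemma numInversions_prod_le (l : List ℕ) :
    ((l.map (simpleT n)).prod).numInversions ≤ l.length := by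
  induction l using List.reverseRecOn with
  | nil => simp
  | append_singleton l i ih =>
    simpa using (numInversions_mul_simpleT_le _ i).trans (Nat.add_le_add_right ih 1)

lemma exists_word_length_numInversions (u : Perm (Fin n)) :
    ∃ l, IsWord n u l ∧ l.length = u.numInversions := by
  induction hk : u.numInversions using Nat.strong_induction_on generalizing u with
  | _ k ih =>
    by_cases hu : u = 1
    · exact ⟨[], ⟨by simp, by simp [hu]⟩, by simp [← hk, hu]⟩
    obtain ⟨j, h, hd⟩ := exists_descent_of_ne_one hu
    set t : Perm (Fin n) := swap ⟨j, by omega⟩ ⟨j + 1, h⟩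
    have hstep : (u * t).numInversions + 1 = u.numInversions :=
      numInversions_mul_swap_add_one rfl hd
    obtain ⟨l, ⟨hl, hprod⟩, hlen⟩ := ih _ (by omega) (u * t) rfl
    refine ⟨l ++ [j + 1], ⟨?_, ?_⟩, ?_⟩
    · simp only [List.mem_append, List.mem_singleton]
      rintro i (hi | rfl)
      exacts [hl i hi, ⟨by omega, h⟩]
    · simp [hprod, simpleT_eq_swap h, mul_assoc, t]
    · rw [List.length_append, List.length_singleton]
      omega

lemma coxLength_eq_numInversions (u : Perm (Fin n)) : coxLength n u = u.numInversions := by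
  obtain ⟨l, hw, hl⟩ := exists_word_length_numInversions u
  refine le_antisymm (Nat.sInf_le ⟨l, hw, hl⟩) (le_csInf ⟨_, l, hw, hl⟩ ?_)
  rintro k ⟨l', ⟨-, rfl⟩, rfl⟩
  exact numInversions_prod_le l'

lemma coxLength_inv (u : Perm (Fin n)) : coxLength n u⁻¹ = coxLength n u := by
  simp only [coxLength_eq_numInversions, numInversions_inv]

lemma prod_reverse_map_simpleT (l : List ℕ) :
    (l.reverse.map (simpleT n)).prod = (l.map (simpleT n)).prod⁻¹ := by
  rw [List.map_reverse, List.prod_reverse_noncomm, List.map_map]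
  simp [Function.comp_def, simpleT_inv]

lemma IsRun.reverse {r : List ℕ} (h : IsRun r) : IsRun r.reverse := by
  obtain ⟨hne, hinc | hdec⟩ := h
  · exact ⟨by simpa using hne, .inr (List.isChain_reverse.2 hinc)⟩
  · exact ⟨by simpa using hne, .inl (List.isChain_reverse.2 hdec)⟩

lemma isRun_range' {a k : ℕ} (hk : 0 < k) : IsRun (List.range' a k) :=
  ⟨by simp only [ne_eq, List.range'_eq_nil_iff]; omega, .inl (List.isChain_range' a k 1)⟩

def descRun (a b : ℕ) : List ℕ := (List.range' (a + 1) (b - a)).reverse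

@[simp]
lemma mem_descRun {a b i : ℕ} : i ∈ descRun a b ↔ a < i ∧ i ≤ b := by
  simp only [descRun, List.mem_reverse, List.mem_range'_1]
  omega

@[simp]
lemma length_descRun (a b : ℕ) : (descRun a b).length = b - a := by
  simp [descRun]

lemma isRun_descRun {a b : ℕ} (hab : a < b) : IsRun (descRun a b) :=
  (isRun_range' (by omega)).reverse

lemma descRun_succ {a b : ℕ} (hab : a ≤ b) : descRun a (b + 1) = (b + 1) :: descRun a b := by
  rw [descRun, descRun, show b + 1 - a = b - a + 1 by omega, List.range'_concat,
    List.reverse_append]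
  simp only [List.reverse_singleton, List.singleton_append, List.cons.injEq, and_true]
  omega

/-- Positions are `0`-indexed while `s_i` swaps `i - 1` and `i`, so `s_b ⋯ s_{a+1}` is the cycle
`a ↦ b ↦ b - 1 ↦ ⋯ ↦ a`. -/
lemma prod_descRun_apply {a b : ℕ} (hab : a ≤ b) (hb : b < n) (x : Fin n) :
    ((((descRun a b).map (simpleT n)).prod x : Fin n) : ℕ) =
      if (x : ℕ) = a then b else if a < x ∧ x ≤ b then x - 1 else x := by
  induction b, hab using Nat.le_induction with
  | base =>
    simp only [descRun, tsub_self, List.range'_zero, List.reverse_nil, List.map_nil,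
      List.prod_nil, coe_one, id_eq]
    split_ifs <;> omega
  | succ b hab ih =>
    rw [descRun_succ hab, List.map_cons, List.prod_cons, Perm.mul_apply, simpleT_eq_swap hb,
      swap_apply_def]
    have := ih (by omega)
    split_ifs at * <;> simp_all [Fin.ext_iff] <;> omega

lemma numInversions_mul_prod_descRun {a b : ℕ} (hab : a ≤ b) (hb : b < n) (u : Perm (Fin n))
    (hmin : ∀ x : Fin n, a ≤ x → (x : ℕ) < b → u ⟨b, hb⟩ < u x) :
    (u * ((descRun a b).map (simpleT n)).prod).numInversions + (b - a) = u.numInversions := by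
  induction b, hab using Nat.le_induction generalizing u with
  | base => simp [descRun]
  | succ b hab ih =>
    set t : Perm (Fin n) := swap ⟨b, by omega⟩ ⟨b + 1, hb⟩
    have ht : simpleT n (b + 1) = t := simpleT_eq_swap hb
    have hstep : (u * t).numInversions + 1 = u.numInversions :=
      numInversions_mul_swap_add_one rfl (hmin _ hab (by simp))
    have hmin' : ∀ x : Fin n, a ≤ x → (x : ℕ) < b →
        (u * t) ⟨b, by omega⟩ < (u * t) x := by
      intro x hax hxb
      have hx : t x = x := swap_apply_of_ne_of_ne (by simp only [ne_eq, Fin.ext_iff]; omega)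
        (by simp only [ne_eq, Fin.ext_iff]; omega)
      simpa [t, hx] using hmin x hax (by omega)
    have := ih (by omega) (u * t) hmin'
    rw [descRun_succ hab, List.map_cons, List.prod_cons, ht, ← mul_assoc]
    omega

lemma bddAbove_lisLen_set (u : Perm (Fin n)) :
    BddAbove {k | ∃ l : List ℕ, l.Sublist (oneLine u) ∧ l.Pairwise (· < ·) ∧
      l.length = k} :=
  ⟨n, by rintro _ ⟨l, hl, -, rfl⟩; simpa [oneLine] using hl.length_le⟩

lemma card_le_lisLen {u : Perm (Fin n)} {s : Finset (Fin n)} (hs : StrictMonoOn u s) :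
    s.card ≤ lisLen u := by
  refine le_csSup (bddAbove_lisLen_set u) ?_
  refine ⟨(s.sort (· ≤ ·)).map (fun i => (u i : ℕ) + 1), ?_, ?_, by simp⟩
  · rw [oneLine, List.ofFn_eq_map]
    refine (List.sublist_of_subperm_of_sortedLE ?_ (Finset.sortedLT_sort s).sortedLE
      (List.sortedLT_finRange n).sortedLE).map _
    exact (Finset.sort_nodup s _).subperm fun x _ => List.mem_finRange x
  · refine List.pairwise_map.2 ((Finset.sortedLT_sort s).pairwise.imp_of_mem ?_)
    intro x y hx hy hxy
    simpa using hs (by simpa using hx) (by simpa using hy) hxy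

lemma exists_strictMonoOn_card_eq_lisLen (u : Perm (Fin n)) :
    ∃ s : Finset (Fin n), StrictMonoOn u s ∧ s.card = lisLen u := by
  obtain ⟨l, hl, hinc, hlen⟩ :=
    Nat.sSup_mem (by exact ⟨0, [], by simp⟩) (bddAbove_lisLen_set u)
  rw [oneLine, List.ofFn_eq_map] at hl
  obtain ⟨is, his, rfl⟩ := List.sublist_map_iff.1 hl
  have hsorted : is.SortedLT := ((List.sortedLT_finRange n).pairwise.sublist his).sortedLT
  refine ⟨is.toFinset, ?_, ?_⟩
  · intro x hx y hy hxy
    obtain ⟨i, hi, rfl⟩ := List.getElem_of_mem (List.mem_toFinset.1 hx)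
    obtain ⟨j, hj, rfl⟩ := List.getElem_of_mem (List.mem_toFinset.1 hy)
    have hij : i < j := hsorted.getElem_lt_getElem_iff.1 hxy
    have := List.pairwise_iff_getElem.1 hinc i j (by simpa) (by simpa) hij
    simp only [List.getElem_map] at this
    exact Fin.lt_def.2 (by omega)
  · rw [List.toFinset_card_of_nodup hsorted.nodup]
    simpa [lisLen] using hlen

lemma StrictMonoOn.perm_inv_map {u : Perm (Fin n)} {s : Finset (Fin n)}
    (hs : StrictMonoOn u s) : StrictMonoOn ⇑u⁻¹ (s.map u.toEmbedding) := by
  simp only [StrictMonoOn, Finset.coe_map, Set.mem_image, Finset.mem_coe]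
  rintro _ ⟨x, hx, rfl⟩ _ ⟨y, hy, rfl⟩ hxy
  simpa using (hs.lt_iff_lt hx hy).1 hxy

lemma lisLen_le_lisLen_inv (u : Perm (Fin n)) : lisLen u ≤ lisLen u⁻¹ := by
  obtain ⟨s, hs, hcard⟩ := exists_strictMonoOn_card_eq_lisLen u
  simpa [hcard] using card_le_lisLen hs.perm_inv_map

lemma lisLen_inv (u : Perm (Fin n)) : lisLen u⁻¹ = lisLen u :=
  le_antisymm (by simpa using lisLen_le_lisLen_inv u⁻¹) (lisLen_le_lisLen_inv u)

section FirstMovedPoint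

variable {α : Type*} [LinearOrder α] {u : Perm α} {a : α}

lemma exists_apply_ne_forall_lt_apply_eq [Fintype α] (hu : u ≠ 1) :
    ∃ a, u a ≠ a ∧ ∀ x < a, u x = x := by
  have hne : u.support.Nonempty := Finset.nonempty_iff_ne_empty.2 (by simpa using hu)
  refine ⟨u.support.min' hne, mem_support.1 (Finset.min'_mem _ hne), fun x hx => ?_⟩
  exact notMem_support.1 fun h => (Finset.min'_le _ x h).not_gt hx

lemma inv_apply_eq_of_forall_lt (hfix : ∀ x < a, u x = x) : ∀ x < a, u⁻¹ x = x :=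
  fun x hx => inv_eq_iff_eq.2 (hfix x hx).symm

lemma le_apply_of_forall_lt (hfix : ∀ x < a, u x = x) {x : α} (hx : a ≤ x) : a ≤ u x := by
  by_contra! h
  have hux : u x = x := u.injective (hfix _ h)
  exact (hux ▸ h).not_ge hx

lemma lt_apply_of_forall_lt (hfix : ∀ x < a, u x = x) (ha : u a ≠ a) : a < u a :=
  (le_apply_of_forall_lt hfix le_rfl).lt_of_ne' ha

end FirstMovedPoint

/-- Right multiplication by the cycle moves the smallest misplaced entry of the one-line notation
from position `b` to position `a`; there it extends any increasing subsequence avoiding `b`. -/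
lemma card_lt_lisLen_mul_prod_descRun {u : Perm (Fin n)} {a b : Fin n} (hab : a ≤ b)
    (hfix : ∀ x < a, u x = x) (hub : u b = a) {s : Finset (Fin n)} (hs : StrictMonoOn u s)
    (hbs : b ∉ s) : s.card < lisLen (u * ((descRun a b).map (simpleT n)).prod) := by
  set c := ((descRun a b).map (simpleT n)).prod
  have hc := prod_descRun_apply (n := n) hab b.isLt
  have hca : c a = b := Fin.ext (by simp [c, hc])
  have hc_lt : ∀ x < a, c x = x := fun x hx => Fin.ext (by
    rw [Fin.lt_def] at hx; simp only [c, hc]; split_ifs <;> omega)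
  have hc_ge : ∀ x, a < x → a ≤ c x := fun x hx => by
    rw [Fin.lt_def] at hx; rw [Fin.le_def]; simp only [c, hc]; split_ifs <;> omega
  have hc_mono : ∀ x y, x ≠ a → x < y → c x < c y := fun x y hx hxy => by
    rw [Ne, Fin.ext_iff] at hx; rw [Fin.lt_def] at hxy ⊢; simp only [c, hc]; split_ifs <;> omega
  set t := insert a (s.map c⁻¹.toEmbedding)
  have hmem : ∀ y, y ∈ s.map c⁻¹.toEmbedding ↔ c y ∈ s := fun y => by
    simp [Finset.mem_map_equiv, Perm.inv_def]
  have hat : a ∉ s.map c⁻¹.toEmbedding := by rwa [hmem, hca]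
  have ht : StrictMonoOn (u * c) t := by
    intro x hx y hy hxy
    simp only [t, Finset.coe_insert, Set.mem_insert_iff, Finset.mem_coe, hmem] at hx hy
    rcases hx with rfl | hx <;> rcases hy with rfl | hy
    · exact absurd hxy (lt_irrefl _)
    · have hcy : c y ≠ b := fun h => hbs (h ▸ hy)
      simp only [Perm.mul_apply, hca, hub]
      exact (le_apply_of_forall_lt hfix (hc_ge y hxy)).lt_of_ne' fun h =>
        hcy (u.injective (h.trans hub.symm))
    · simpa [hc_lt x hxy, hfix x hxy, hca, hub] using hxy
    · have hxa : x ≠ a := fun h => hat ((hmem a).2 (h ▸ hx))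
      exact hs hx hy (hc_mono x y hxa hxy)
  have hcard : t.card = s.card + 1 := by
    rw [Finset.card_insert_of_notMem hat, Finset.card_map]
  have := card_le_lisLen ht
  omega

lemma coxLength_and_lisLen_mul_prod_descRun {u : Perm (Fin n)} {a b : Fin n} (hab : a < b)
    (hfix : ∀ x < a, u x = x) (hub : u b = a) {s : Finset (Fin n)} (hs : StrictMonoOn u s)
    (hcard : s.card = lisLen u) (hbs : b ∉ s) :
    coxLength n (u * ((descRun a b).map (simpleT n)).prod) + (descRun a b).length =
        coxLength n u ∧
      lisLen u < lisLen (u * ((descRun a b).map (simpleT n)).prod) := by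
  refine ⟨?_, hcard ▸ card_lt_lisLen_mul_prod_descRun hab.le hfix hub hs hbs⟩
  rw [coxLength_eq_numInversions, coxLength_eq_numInversions, length_descRun]
  refine numInversions_mul_prod_descRun (Fin.le_def.1 hab.le) b.isLt u fun x hax hxb => ?_
  have hxb : x ≠ b := by rintro rfl; omega
  exact hub ▸ (le_apply_of_forall_lt hfix hax).lt_of_ne' fun h =>
    hxb (u.injective (h.trans hub.symm))

theorem stmt3 (n : ℕ) (w : Equiv.Perm (Fin n)) (hw : w ≠ 1) :
    ∃ r : List ℕ, IsRun r ∧ (∀ i ∈ r, 1 ≤ i ∧ i < n) ∧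
      ((coxLength n (w * (r.map (simpleT n)).prod) + r.length = coxLength n w ∧
          lisLen w < lisLen (w * (r.map (simpleT n)).prod)) ∨
        (coxLength n ((r.map (simpleT n)).prod * w) + r.length = coxLength n w ∧
          lisLen w < lisLen ((r.map (simpleT n)).prod * w))) := by
  obtain ⟨a, hwa, hfix⟩ := exists_apply_ne_forall_lt_apply_eq hw
  have hfix' := inv_apply_eq_of_forall_lt hfix
  have hab : a < w⁻¹ a := lt_apply_of_forall_lt hfix' fun h => hwa (inv_eq_iff_eq.1 h).symm
  have haw : a < w a := lt_apply_of_forall_lt hfix hwa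
  obtain ⟨s, hs, hcard⟩ := exists_strictMonoOn_card_eq_lisLen w
  by_cases hbs : w⁻¹ a ∉ s
  · refine ⟨descRun a (w⁻¹ a), isRun_descRun hab, fun i hi => ?_,
      .inl (coxLength_and_lisLen_mul_prod_descRun hab hfix (by simp) hs hcard hbs)⟩
    have := (w⁻¹ a).isLt
    rw [mem_descRun] at hi
    omega
  -- Otherwise `a ∉ s`, and transposing `s` reduces to the first case for `w⁻¹`.
  have has : a ∉ s := fun ha => (hs ha (not_not.1 hbs) hab).not_gt (by simpa using haw)
  obtain ⟨hcox, hlis⟩ := coxLength_and_lisLen_mul_prod_descRun (u := w⁻¹) haw hfix' (by simp)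
    hs.perm_inv_map (by simpa [lisLen_inv] using hcard) ((Finset.mem_map' w.toEmbedding).not.2 has)
  refine ⟨(descRun a (w a)).reverse, (isRun_descRun haw).reverse, fun i hi => ?_, .inr ?_⟩
  · have := (w a).isLt
    rw [List.mem_reverse, mem_descRun] at hi
    omega
  rw [prod_reverse_map_simpleT, ← inv_inv (_ * w), mul_inv_rev, inv_inv, coxLength_inv,
    lisLen_inv, List.length_reverse]
  rw [coxLength_inv] at hcox
  rw [lisLen_inv] at hlis
  exact ⟨hcox, hlis⟩
end

section
/- If w is a boolean permutation, then there do not exist three consecutive integers i, i+1, i+2 all appearing in the second row of the RSK insertion tableau P(w). -/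
/-!
A product of distinct simple transpositions avoids `321` and `3412`: if `a` does not occur in the
rest of the word, the rest maps the positions below `a` to the values below `a`, so multiplying by
`s_a` exchanges the values `a - 1` and `a` sitting at positions `x < a ≤ y`, and no occurrence of
either pattern can use both of them.

Conversely, a letter `v` in the second row of `P(s)` was bumped out of the first row at some time
`t` by a smaller letter `s_t` occurring after `v`, and every letter `x` with `s_t < x < v` occurring
before time `t` must already have been bumped. If `i, i+1, i+2` are all in the second row and their
positions are not increasing, the bump of the smaller letter of an inverted pair is a `321`.
Otherwise the letter `u` bumping `i+2` is below `i`, so `i+1` was bumped earlier by some `u'`, and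
`(i+1, u', u)` is a `321` if `u < u'`, while `(i, i+1, u', u)` is a `3412` if `u' < u`.
-/

@[simp]
theorem rowInsert_nil (x : ℕ) : rowInsert [] x = ([x], none) := rfl

theorem rowInsert_cons (y : ℕ) (r : List ℕ) (x : ℕ) :
    rowInsert (y :: r) x = if x < y then (x :: r, some y)
      else (y :: (rowInsert r x).1, (rowInsert r x).2) := by
  unfold rowInsert
  rw [List.findIdx?_cons]
  by_cases h : x < y
  · simp [h]
  · rcases List.findIdx? (fun y => decide (x < y)) r with _ | i <;> simp [h]

theorem mem_rowInsert_fst_self (r : List ℕ) (x : ℕ) : x ∈ (rowInsert r x).1 := by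
  induction r with
  | nil => simp
  | cons y r ih =>
    rw [rowInsert_cons]
    split_ifs <;> simp [ih]

theorem mem_of_mem_rowInsert_fst {r : List ℕ} {x z : ℕ} (h : z ∈ (rowInsert r x).1) :
    z ∈ r ∨ z = x := by
  induction r with
  | nil => simpa using h
  | cons y r ih =>
    rw [rowInsert_cons] at h
    split_ifs at h
    · simp only [List.mem_cons] at h ⊢
      tauto
    · simp only [List.mem_cons] at h ⊢
      rcases h with h | h
      · exact Or.inl (Or.inl h)
      · rcases ih h with h | h <;> simp [h]

theorem mem_rowInsert_fst_or_snd_eq {r : List ℕ} {x z : ℕ} (h : z ∈ r) :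
    z ∈ (rowInsert r x).1 ∨ (rowInsert r x).2 = some z := by
  induction r with
  | nil => simp at h
  | cons y r ih =>
    rw [rowInsert_cons]
    obtain rfl | h := List.mem_cons.1 h
    · split_ifs <;> simp
    · split_ifs
      · simp [h]
      · rcases ih h with h | h <;> simp [h]

theorem rowInsert_snd_eq_some {r : List ℕ} {x v : ℕ} (h : (rowInsert r x).2 = some v) :
    v ∈ r ∧ x < v := by
  induction r with
  | nil => simp at h
  | cons y r ih =>
    rw [rowInsert_cons] at h
    split_ifs at h with hxy
    · cases h
      exact ⟨List.mem_cons_self, hxy⟩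
    · exact (ih h).imp_left (List.mem_cons_of_mem _)

theorem le_of_rowInsert_snd_eq_some {r : List ℕ} {x v y : ℕ} (hs : r.Pairwise (· < ·))
    (h : (rowInsert r x).2 = some v) (hy : y ∈ r) (hxy : x < y) : v ≤ y := by
  induction r with
  | nil => simp at hy
  | cons a r ih =>
    rw [rowInsert_cons] at h
    rw [List.pairwise_cons] at hs
    obtain rfl | hyr := List.mem_cons.1 hy
    · split_ifs at h
      · cases h; rfl
    · split_ifs at h
      · cases h; exact (hs.1 y hyr).le
      · exact ih hs.2 h hyr

theorem pairwise_rowInsert_fst {r : List ℕ} {x : ℕ} (hs : r.Pairwise (· < ·)) (hx : x ∉ r) :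
    (rowInsert r x).1.Pairwise (· < ·) := by
  induction r with
  | nil => simp
  | cons a r ih =>
    rw [List.pairwise_cons] at hs
    rw [List.mem_cons, not_or] at hx
    rw [rowInsert_cons]
    split_ifs with hxa
    · exact List.pairwise_cons.2 ⟨fun b hb => hxa.trans (hs.1 b hb), hs.2⟩
    · refine List.pairwise_cons.2 ⟨fun b hb => ?_, ih hs.2 hx.2⟩
      rcases mem_of_mem_rowInsert_fst hb with hb | rfl
      · exact hs.1 b hb
      · omega

def rowInsertMany (r s : List ℕ) : List ℕ := s.foldl (fun r x => (rowInsert r x).1) r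

def rowBumps : List ℕ → List ℕ → List ℕ
  | _, [] => []
  | r, x :: s => (rowInsert r x).2.toList ++ rowBumps (rowInsert r x).1 s

def bumpedAt (s : List ℕ) (t : ℕ) : Option ℕ :=
  (rowInsert (rowInsertMany [] (s.take t)) (s.getD t 0)).2

theorem rowInsertMany_append_singleton (r s : List ℕ) (a : ℕ) :
    rowInsertMany r (s ++ [a]) = (rowInsert (rowInsertMany r s) a).1 := by
  simp [rowInsertMany]

theorem mem_of_mem_rowInsertMany {r s : List ℕ} {z : ℕ} (h : z ∈ rowInsertMany r s) :
    z ∈ r ∨ z ∈ s := by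
  induction s generalizing r with
  | nil => exact Or.inl h
  | cons x s ih =>
    rcases ih h with h | h
    · rcases mem_of_mem_rowInsert_fst h with h | rfl <;> simp [h]
    · simp [h]

theorem pairwise_rowInsertMany_nil {s : List ℕ} (hs : s.Nodup) :
    (rowInsertMany [] s).Pairwise (· < ·) := by
  induction s using List.reverseRecOn with
  | nil => simp [rowInsertMany]
  | append_singleton s a ih =>
    rw [List.nodup_append] at hs
    rw [rowInsertMany_append_singleton]
    refine pairwise_rowInsert_fst (ih hs.1) fun ha => ?_
    rcases mem_of_mem_rowInsertMany ha with h | h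
    · simp at h
    · exact hs.2.2 a h a (List.mem_singleton_self a) rfl

theorem bumpedAt_take {s : List ℕ} {t t' : ℕ} (h : t' < t) :
    bumpedAt (s.take t) t' = bumpedAt s t' := by
  simp only [bumpedAt, List.take_take, min_eq_left h.le, List.getD_eq_getElem?_getD,
    List.getElem?_take, if_pos h]

theorem bumpedAt_eq_some {s : List ℕ} {t v : ℕ} (h : bumpedAt s t = some v) :
    (∃ p < t, s.getD p 0 = v) ∧ s.getD t 0 < v := by
  obtain ⟨hv, hlt⟩ := rowInsert_snd_eq_some h
  refine ⟨?_, hlt⟩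
  rcases mem_of_mem_rowInsertMany hv with hv | hv
  · simp at hv
  obtain ⟨p, hp, rfl⟩ := List.mem_iff_getElem.1 hv
  rw [List.length_take] at hp
  exact ⟨p, by omega, by rw [List.getD_eq_getElem _ _ (by omega), List.getElem_take]⟩

theorem exists_bumpedAt_of_not_mem_rowInsertMany {s : List ℕ} {v : ℕ} (hv : v ∈ s)
    (hv' : v ∉ rowInsertMany [] s) : ∃ t < s.length, bumpedAt s t = some v := by
  induction s using List.reverseRecOn with
  | nil => simp at hv
  | append_singleton s a ih =>
    have htake : ∀ t < s.length, bumpedAt (s ++ [a]) t = bumpedAt s t := fun t ht => by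
      rw [← bumpedAt_take ht, List.take_left' rfl]
    rw [rowInsertMany_append_singleton] at hv'
    rcases List.mem_append.1 hv with hv | hv
    · by_cases hmem : v ∈ rowInsertMany [] s
      · refine ⟨s.length, by simp, ?_⟩
        simpa [bumpedAt, hv'] using mem_rowInsert_fst_or_snd_eq (x := a) hmem
      · obtain ⟨t, ht, hb⟩ := ih hv hmem
        exact ⟨t, by simp; omega, (htake t ht).trans hb⟩
    · rw [List.mem_singleton.1 hv] at hv'
      exact absurd (mem_rowInsert_fst_self _ a) hv'

-- A letter still in the first row strictly between `s_t` and `v` would be bumped instead of `v`.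
theorem exists_bumpedAt_of_lt_of_lt {s : List ℕ} (hs : s.Nodup) {t v p : ℕ}
    (h : bumpedAt s t = some v) (hp : p < t) (hlt : s.getD t 0 < s.getD p 0)
    (hpv : s.getD p 0 < v) : ∃ t' < t, bumpedAt s t' = some (s.getD p 0) := by
  have hps : p < s.length := by
    by_contra! hps
    rw [List.getD_eq_default _ _ hps] at hlt
    omega
  have hx : s.getD p 0 ∈ s.take t := by
    rw [List.getD_eq_getElem _ _ hps, ← List.getElem_take (j := t) (h := by simp; omega)]
    exact List.getElem_mem _
  have hx' : s.getD p 0 ∉ rowInsertMany [] (s.take t) := fun hx' =>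
    (le_of_rowInsert_snd_eq_some (pairwise_rowInsertMany_nil (hs.sublist (List.take_sublist t s)))
      h hx' hlt).not_gt hpv
  obtain ⟨t', ht', hb⟩ := exists_bumpedAt_of_not_mem_rowInsertMany hx hx'
  have ht't : t' < t := ht'.trans_le (List.length_take_le _ _)
  exact ⟨t', ht't, (bumpedAt_take ht't).symm.trans hb⟩

theorem bumpInsert_cons (r : List ℕ) (rest : List (List ℕ)) (x : ℕ) :
    bumpInsert (r :: rest) x =
      (rowInsert r x).1 :: (rowInsert r x).2.toList.foldl bumpInsert rest := by
  show (match rowInsert r x with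
    | (r', none) => r' :: rest
    | (r', some y) => r' :: bumpInsert rest y) = _
  rcases rowInsert r x with ⟨r', _ | y⟩ <;> rfl

theorem foldl_bumpInsert_cons (s r : List ℕ) (rest : List (List ℕ)) :
    s.foldl bumpInsert (r :: rest) = rowInsertMany r s :: (rowBumps r s).foldl bumpInsert rest := by
  induction s generalizing r rest with
  | nil => rfl
  | cons x s ih =>
    simp only [List.foldl_cons, bumpInsert_cons, ih, rowBumps, List.foldl_append]
    rfl

theorem mem_flatten_bumpInsert {t : List (List ℕ)} {x z : ℕ}
    (h : z ∈ (bumpInsert t x).flatten) : z = x ∨ z ∈ t.flatten := by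
  induction t generalizing x with
  | nil => simpa [bumpInsert] using h
  | cons r rest ih =>
    rw [bumpInsert_cons, List.flatten_cons, List.mem_append] at h
    rw [List.flatten_cons, List.mem_append]
    rcases h with h | h
    · rcases mem_of_mem_rowInsert_fst h with h | h <;> simp [h]
    · rcases hb : (rowInsert r x).2 with _ | y <;> rw [hb] at h
      · exact Or.inr (Or.inr h)
      · rcases ih h with rfl | h
        · exact Or.inr (Or.inl (rowInsert_snd_eq_some hb).1)
        · exact Or.inr (Or.inr h)

theorem mem_flatten_foldl_bumpInsert {l : List ℕ} {t : List (List ℕ)} {z : ℕ}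
    (h : z ∈ (l.foldl bumpInsert t).flatten) : z ∈ l ∨ z ∈ t.flatten := by
  induction l generalizing t with
  | nil => exact Or.inr h
  | cons x l ih =>
    rcases ih h with h | h
    · simp [h]
    · rcases mem_flatten_bumpInsert h with rfl | h <;> simp [h]

theorem mem_rowBumps {r s : List ℕ} {v : ℕ} (h : v ∈ rowBumps r s) :
    ∃ t < s.length, (rowInsert (rowInsertMany r (s.take t)) (s.getD t 0)).2 = some v := by
  induction s generalizing r with
  | nil => simp [rowBumps] at h
  | cons x s ih =>
    rw [rowBumps, List.mem_append] at h
    rcases h with h | h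
    · exact ⟨0, by simp, by simpa [rowInsertMany] using h⟩
    · obtain ⟨t, ht, hb⟩ := ih h
      exact ⟨t + 1, by simpa using ht, by simpa [rowInsertMany] using hb⟩

theorem exists_bumpedAt_of_mem_row2 {s : List ℕ} {v : ℕ} (h : v ∈ Row2 (Ptab s)) :
    ∃ t < s.length, bumpedAt s t = some v := by
  obtain _ | ⟨x, s⟩ := s
  · simp [Ptab, Row2] at h
  -- Inserting into `[]` and into `[[]]` give the same tableau.
  have hP : Ptab (x :: s) = (x :: s).foldl bumpInsert [[]] := rfl
  rw [hP, foldl_bumpInsert_cons, Row2, List.getD_cons_succ] at h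
  have hmem : v ∈ ((rowBumps [] (x :: s)).foldl bumpInsert []).flatten := by
    rcases hT : (rowBumps [] (x :: s)).foldl bumpInsert [] with _ | ⟨row, rows⟩ <;>
      simp_all
  rcases mem_flatten_foldl_bumpInsert hmem with h | h
  · exact mem_rowBumps h
  · simp at h

def HasPattern321 (s : List ℕ) : Prop :=
  ∃ a b c, a < b ∧ b < c ∧ c < s.length ∧
    s.getD c 0 < s.getD b 0 ∧ s.getD b 0 < s.getD a 0

def HasPattern3412 (s : List ℕ) : Prop :=
  ∃ a b c d, a < b ∧ b < c ∧ c < d ∧ d < s.length ∧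
    s.getD c 0 < s.getD d 0 ∧ s.getD d 0 < s.getD a 0 ∧ s.getD a 0 < s.getD b 0

theorem List.Nodup.getD_ne_getD {s : List ℕ} (hs : s.Nodup) {a b : ℕ} (ha : a < s.length)
    (hb : b < s.length) (hab : a ≠ b) : s.getD a 0 ≠ s.getD b 0 := by
  rw [List.getD_eq_getElem _ _ ha, List.getD_eq_getElem _ _ hb]
  exact fun h => hab (hs.getElem_inj_iff.1 h)

theorem hasPattern321_or_hasPattern3412_of_mem_row2 {s : List ℕ} (hs : s.Nodup) {i : ℕ}
    (h₀ : i ∈ Row2 (Ptab s)) (h₁ : i + 1 ∈ Row2 (Ptab s)) (h₂ : i + 2 ∈ Row2 (Ptab s)) :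
    HasPattern321 s ∨ HasPattern3412 s := by
  obtain ⟨T₀, hT₀, hb₀⟩ := exists_bumpedAt_of_mem_row2 h₀
  obtain ⟨T₁, hT₁, hb₁⟩ := exists_bumpedAt_of_mem_row2 h₁
  obtain ⟨T₂, hT₂, hb₂⟩ := exists_bumpedAt_of_mem_row2 h₂
  obtain ⟨⟨p₀, hp₀, hv₀⟩, hu₀⟩ := bumpedAt_eq_some hb₀
  obtain ⟨⟨p₁, hp₁, hv₁⟩, hu₁⟩ := bumpedAt_eq_some hb₁
  obtain ⟨⟨p₂, hp₂, hv₂⟩, hu₂⟩ := bumpedAt_eq_some hb₂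
  rcases (show p₀ ≠ p₁ by rintro rfl; omega).lt_or_gt with hp₀₁ | hp₁₀
  swap; · exact Or.inl ⟨p₁, p₀, T₀, hp₁₀, hp₀, hT₀, by omega, by omega⟩
  rcases (show p₁ ≠ p₂ by rintro rfl; omega).lt_or_gt with hp₁₂ | hp₂₁
  swap; · exact Or.inl ⟨p₂, p₁, T₁, hp₂₁, hp₁, hT₁, by omega, by omega⟩
  have hu₂ : s.getD T₂ 0 < i := by
    have := hs.getD_ne_getD hT₂ (b := p₀) (by omega) (by omega)
    have := hs.getD_ne_getD hT₂ (b := p₁) (by omega) (by omega)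
    omega
  obtain ⟨t, ht, hb⟩ := exists_bumpedAt_of_lt_of_lt hs hb₂ (p := p₁) (by omega) (by omega)
    (by omega)
  obtain ⟨⟨q, hq, hvq⟩, hu⟩ := bumpedAt_eq_some hb
  have hqp : q = p₁ := by
    by_contra hqp
    exact hs.getD_ne_getD (by omega) (by omega) hqp hvq
  rcases (hs.getD_ne_getD (a := t) (b := T₂) (by omega) hT₂ (by omega)).lt_or_gt with hut | hut
  · exact Or.inr ⟨p₀, p₁, t, T₂, hp₀₁, by omega, ht, hT₂, hut, by omega, by omega⟩
  · exact Or.inl ⟨p₁, t, T₂, by omega, ht, hT₂, hut, by omega⟩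

theorem simpleT_apply_lt_iff {n a b : ℕ} (hba : b ≠ a) (x : Fin n) :
    (simpleT n b x : ℕ) < a ↔ (x : ℕ) < a := by
  unfold simpleT
  split_ifs
  · rw [Equiv.swap_apply_def]
    split_ifs with h₁ h₂ <;> simp only [Fin.ext_iff] at * <;> omega
  · rfl

theorem prod_map_simpleT_apply_lt_iff {n a : ℕ} {l : List ℕ} (ha : a ∉ l) (x : Fin n) :
    ((l.map (simpleT n)).prod x : ℕ) < a ↔ (x : ℕ) < a := by
  induction l generalizing x with
  | nil => rfl
  | cons b l ih =>
    rw [List.mem_cons, not_or] at ha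
    rw [List.map_cons, List.prod_cons, Equiv.Perm.mul_apply, simpleT_apply_lt_iff (Ne.symm ha.1),
      ih ha.2]

theorem simpleT_apply_cases {n a : ℕ} (ha : 1 ≤ a ∧ a < n) (y : Fin n) :
    ((y : ℕ) = a - 1 ∧ (simpleT n a y : ℕ) = a) ∨
      ((y : ℕ) = a ∧ (simpleT n a y : ℕ) = a - 1) ∨
      ((y : ℕ) ≠ a - 1 ∧ (y : ℕ) ≠ a ∧ (simpleT n a y : ℕ) = y) := by
  rw [simpleT, dif_pos ha, Equiv.swap_apply_def]
  split_ifs with h₁ h₂ <;> simp only [Fin.ext_iff, and_true] at * <;> omega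

theorem Avoids321.simpleT_mul {n a : ℕ} {u : Equiv.Perm (Fin n)} (hu : Avoids321 u)
    (hblock : ∀ x : Fin n, (u x : ℕ) < a ↔ (x : ℕ) < a) : Avoids321 (simpleT n a * u) := by
  by_cases ha : 1 ≤ a ∧ a < n
  swap; · simpa [simpleT, ha] using hu
  rintro ⟨x, y, z, hxy, hyz, h₁, h₂⟩
  rw [Fin.lt_def] at hxy hyz h₁ h₂
  simp only [Equiv.Perm.mul_apply] at h₁ h₂
  have hinj : ∀ x y : Fin n, x ≠ y → (u x : ℕ) ≠ (u y : ℕ) := fun x y hne h =>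
    hne (u.injective (Fin.ext h))
  have := hinj x y (by rintro rfl; omega)
  have := hinj x z (by rintro rfl; omega)
  have := hinj y z (by rintro rfl; omega)
  have := hblock x; have := hblock y; have := hblock z
  rcases simpleT_apply_cases ha (u x) with h | h | h <;>
    rcases simpleT_apply_cases ha (u y) with h | h | h <;>
    rcases simpleT_apply_cases ha (u z) with h | h | h <;>
    first
      | omega
      | exact hu ⟨x, y, z, hxy, hyz, by omega, by omega⟩

theorem Avoids3412.simpleT_mul {n a : ℕ} {u : Equiv.Perm (Fin n)} (hu : Avoids3412 u)
    (hblock : ∀ x : Fin n, (u x : ℕ) < a ↔ (x : ℕ) < a) : Avoids3412 (simpleT n a * u) := by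
  by_cases ha : 1 ≤ a ∧ a < n
  swap; · simpa [simpleT, ha] using hu
  rintro ⟨x, y, z, t, hxy, hyz, hzt, h₁, h₂, h₃⟩
  rw [Fin.lt_def] at hxy hyz hzt h₁ h₂ h₃
  simp only [Equiv.Perm.mul_apply] at h₁ h₂ h₃
  have hinj : ∀ x y : Fin n, x ≠ y → (u x : ℕ) ≠ (u y : ℕ) := fun x y hne h =>
    hne (u.injective (Fin.ext h))
  have := hinj x y (by rintro rfl; omega)
  have := hinj x z (by rintro rfl; omega)
  have := hinj x t (by rintro rfl; omega)
  have := hinj y z (by rintro rfl; omega)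
  have := hinj y t (by rintro rfl; omega)
  have := hinj z t (by rintro rfl; omega)
  have := hblock x; have := hblock y; have := hblock z; have := hblock t
  rcases simpleT_apply_cases ha (u x) with h | h | h <;>
    rcases simpleT_apply_cases ha (u y) with h | h | h <;>
    rcases simpleT_apply_cases ha (u z) with h | h | h <;>
    rcases simpleT_apply_cases ha (u t) with h | h | h <;>
    first
      | omega
      | exact hu ⟨x, y, z, t, hxy, hyz, hzt, by omega, by omega, by omega⟩

theorem avoids321_and_avoids3412_prod_of_nodup {n : ℕ} {l : List ℕ} (hl : l.Nodup) :
    Avoids321 (l.map (simpleT n)).prod ∧ Avoids3412 (l.map (simpleT n)).prod := by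
  induction l with
  | nil =>
    refine ⟨?_, ?_⟩
    · rintro ⟨x, y, z, -, hyz, h, -⟩
      exact lt_asymm hyz h
    · rintro ⟨x, y, z, t, hxy, hyz, hzt, -, h, -⟩
      exact lt_asymm (hxy.trans (hyz.trans hzt)) h
  | cons a l ih =>
    rw [List.nodup_cons] at hl
    obtain ⟨h321, h3412⟩ := ih hl.2
    have hblock := prod_map_simpleT_apply_lt_iff (n := n) hl.1
    rw [List.map_cons, List.prod_cons]
    exact ⟨h321.simpleT_mul hblock, h3412.simpleT_mul hblock⟩

theorem BooleanPerm.avoids321_and_avoids3412 {n : ℕ} {w : Equiv.Perm (Fin n)}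
    (h : BooleanPerm n w) : Avoids321 w ∧ Avoids3412 w := by
  obtain ⟨l, ⟨⟨-, rfl⟩, -⟩, hl⟩ := h
  exact avoids321_and_avoids3412_prod_of_nodup hl

theorem getD_oneLine {n : ℕ} (w : Equiv.Perm (Fin n)) {c : ℕ} (hc : c < n) :
    (oneLine w).getD c 0 = w ⟨c, hc⟩ + 1 := by
  simp [oneLine, List.getD_eq_getElem?_getD, hc]

theorem nodup_oneLine {n : ℕ} (w : Equiv.Perm (Fin n)) : (oneLine w).Nodup :=
  List.nodup_ofFn.2 fun x y h => w.injective (Fin.ext (by simpa using h))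

theorem Avoids321.not_hasPattern321_oneLine {n : ℕ} {w : Equiv.Perm (Fin n)}
    (hw : Avoids321 w) : ¬ HasPattern321 (oneLine w) := by
  rintro ⟨a, b, c, hab, hbc, hc, h₁, h₂⟩
  rw [show (oneLine w).length = n by simp [oneLine]] at hc
  rw [getD_oneLine w hc, getD_oneLine w (hbc.trans hc)] at h₁
  rw [getD_oneLine w (hbc.trans hc), getD_oneLine w (by omega)] at h₂
  exact hw ⟨⟨a, by omega⟩, ⟨b, by omega⟩, ⟨c, hc⟩, hab, hbc,
    by simpa using h₁, by simpa using h₂⟩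

theorem Avoids3412.not_hasPattern3412_oneLine {n : ℕ} {w : Equiv.Perm (Fin n)}
    (hw : Avoids3412 w) : ¬ HasPattern3412 (oneLine w) := by
  rintro ⟨a, b, c, d, hab, hbc, hcd, hd, h₁, h₂, h₃⟩
  rw [show (oneLine w).length = n by simp [oneLine]] at hd
  rw [getD_oneLine w (by omega), getD_oneLine w hd] at h₁
  rw [getD_oneLine w hd, getD_oneLine w (by omega)] at h₂
  rw [getD_oneLine w (by omega), getD_oneLine w (by omega)] at h₃
  exact hw ⟨⟨a, by omega⟩, ⟨b, by omega⟩, ⟨c, by omega⟩, ⟨d, hd⟩, hab, hbc, hcd,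
    by simpa using h₁, by simpa using h₂, by simpa using h₃⟩

theorem stmt11 (n : ℕ) (w : Equiv.Perm (Fin n)) (h : BooleanPerm n w) :
    ¬ ∃ i : ℕ, i ∈ Row2 (Ptab (oneLine w)) ∧ i + 1 ∈ Row2 (Ptab (oneLine w)) ∧
      i + 2 ∈ Row2 (Ptab (oneLine w)) := by
  rintro ⟨i, h₀, h₁, h₂⟩
  obtain ⟨h321, h3412⟩ := h.avoids321_and_avoids3412
  rcases hasPattern321_or_hasPattern3412_of_mem_row2 (nodup_oneLine w) h₀ h₁ h₂ with h | h
  · exact h321.not_hasPattern321_oneLine h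
  · exact h3412.not_hasPattern3412_oneLine h
end
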